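/- arXiv:2207.04139 — 3 statements merged into one kernel-verified Lean document; each statement's English description precedes it below -/
import Mathlib

section
/- Let g ≥ 1, let U be an open subset of Sym_g(ℂ), and let F : U → ℂ be holomorphic. Then D_{R(1,…,1)}(F,…,F) = g! · det(∂F) as functions on U, where R(1,…,1) is the coefficient of t₁t₂⋯t_g in det(t₁R₁+⋯+t_gR_g). -/
open scoped BigOperators Matrix

noncomputable section

abbrev MatC (g : ℕ) : Type := Fin g → Fin g → ℂ

def symSubmodule (g : ℕ) : Submodule ℂ (MatC g) where
  carrier := {A | ∀ i j, A i j = A j i}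
  add_mem' := by
    intro A B hA hB i j
    simp only [Set.mem_setOf_eq, Pi.add_apply] at *
    rw [hA i j, hB i j]
  zero_mem' := by intro i j; rfl
  smul_mem' := by
    intro c A hA i j
    simp only [Set.mem_setOf_eq, Pi.smul_apply] at *
    rw [hA i j]

abbrev SymC (g : ℕ) : Type := ↥(symSubmodule g)

def symE2 (g : ℕ) (s : Sym2 (Fin g)) : SymC g :=
  ⟨fun u v => if s = s(u, v) then (if u = v then 2 else 1) else 0, by
    intro u v
    simp only []
    have h1 : s(v, u) = s(u, v) := Sym2.eq_swap
    show (if s = s(u,v) then (if u = v then (2:ℂ) else 1) else 0)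
        = (if s = s(v,u) then (if v = u then 2 else 1) else 0)
    rw [h1]
    by_cases huv : u = v
    · subst huv; rfl
    · have hvu : ¬ v = u := fun e => huv e.symm
      simp [huv, hvu]⟩

def pdMat (g : ℕ) (F : SymC g → ℂ) (τ : SymC g) : Matrix (Fin g) (Fin g) ℂ :=
  Matrix.of fun i j => (1 / 2 : ℂ) * fderiv ℂ F τ (symE2 g s(i, j))

/-- Variable index for the polynomial ring `ℂ[R₁,…,R_g]`: the variable `r_{h;ij} = r_{h;ji}`
corresponds to the pair `(h, {i,j})`. -/
abbrev RVars (g : ℕ) : Type := Fin g × Sym2 (Fin g)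

/-- The polynomial ring `ℂ[R₁,…,R_g]` in the entries of `g` generic symmetric `g×g` matrices. -/
abbrev PolyR (g : ℕ) : Type := MvPolynomial (RVars g) ℂ

/-- `det(t₁R₁ + ⋯ + t_gR_g)` as a polynomial in `t₁,…,t_g` over `ℂ[R₁,…,R_g]`. -/
def detT (g : ℕ) : MvPolynomial (Fin g) (PolyR g) :=
  (Matrix.of fun i j : Fin g =>
      ∑ h : Fin g, MvPolynomial.X h *
        MvPolynomial.C (MvPolynomial.X (h, s(i, j)) : PolyR g)).det

/-- `R(n)`: the coefficient of `t₁^{n₁}⋯t_g^{n_g}` in `det(t₁R₁+⋯+t_gR_g)`. -/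
def Rpoly (g : ℕ) (n : Fin g → ℕ) : PolyR g :=
  MvPolynomial.coeff (Finsupp.equivFunOnFinite.symm n) (detT g)

/-- The substitution `P(R₁,…,R_g) ↦ P(AR₁Aᵀ,…,AR_gAᵀ)`. -/
def substA (g : ℕ) (A : Matrix (Fin g) (Fin g) ℂ) : PolyR g →ₐ[ℂ] PolyR g :=
  MvPolynomial.aeval fun v : RVars g =>
    Sym2.lift ⟨fun i j => ∑ u : Fin g, ∑ w : Fin g,
        MvPolynomial.C (A i u) * MvPolynomial.C (A j w) * MvPolynomial.X (v.1, s(u, w)),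
      by
        intro i j
        dsimp only
        rw [Finset.sum_comm]
        refine Finset.sum_congr rfl fun u _ => Finset.sum_congr rfl fun w _ => ?_
        rw [Sym2.eq_swap]
        ring⟩ v.2


/-- The exponents in a monomial `d` of the variables from the block `R_h`. -/
def restrictRow (g : ℕ) (d : RVars g →₀ ℕ) (h : Fin g) : Sym2 (Fin g) →₀ ℕ :=
  Finsupp.equivFunOnFinite.symm fun s => d (h, s)

/-- The mixed partial derivative `∏_{s} ∂_s^{d s} f` (each `∂_s` being
`((1+δ_{ij})/2)·∂/∂τ_{ij}` for `s = {i,j}`), realized via `iteratedFDeriv`. -/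
def monoDeriv (g : ℕ) (d : Sym2 (Fin g) →₀ ℕ) (f : SymC g → ℂ) (τ : SymC g) : ℂ :=
  (1 / 2 : ℂ) ^ d.toMultiset.toList.length *
    iteratedFDeriv ℂ d.toMultiset.toList.length f τ
      (fun i => (symE2 g (d.toMultiset.toList.get i) : SymC g))

/-- The differential operator `D_Q` attached to a polynomial `Q ∈ ℂ[R₁,…,R_g]`, applied to a
`g`-tuple of functions and evaluated at `τ₁ = ⋯ = τ_g = τ`. -/
def DQop (g : ℕ) (Q : PolyR g) (F : Fin g → SymC g → ℂ) (τ : SymC g) : ℂ :=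
  ∑ d ∈ Q.support, Q.coeff d * ∏ h : Fin g, monoDeriv g (restrictRow g d h) (F h) τ

-- ===== auxiliary development =====

def Mfun (g : ℕ) (F : SymC g → ℂ) (τ : SymC g) (d : RVars g →₀ ℕ) : ℂ :=
  ∏ h : Fin g, monoDeriv g (restrictRow g d h) F τ

lemma DQop_eq_Mfun (g : ℕ) (Q : PolyR g) (F : SymC g → ℂ) (τ : SymC g) :
    DQop g Q (fun _ => F) τ = ∑ d ∈ Q.support, Q.coeff d * Mfun g F τ d := rfl

lemma DQop_superset (g : ℕ) (Q : PolyR g) (F : SymC g → ℂ) (τ : SymC g)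
    (S : Finset (RVars g →₀ ℕ)) (hS : Q.support ⊆ S) :
    DQop g Q (fun _ => F) τ = ∑ d ∈ S, Q.coeff d * Mfun g F τ d := by
  rw [DQop_eq_Mfun]
  exact Finset.sum_subset hS (fun d _ hd => by
    rw [MvPolynomial.notMem_support_iff.mp hd, zero_mul])

lemma DQop_monomial (g : ℕ) (d : RVars g →₀ ℕ) (c : ℂ) (F : SymC g → ℂ) (τ : SymC g) :
    DQop g (MvPolynomial.monomial d c) (fun _ => F) τ = c * Mfun g F τ d := by
  rw [DQop_superset g _ F τ {d} (by
    rw [MvPolynomial.support_monomial]; split_ifs <;> simp)]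
  simp [MvPolynomial.coeff_monomial]

lemma DQop_sum {ι : Type*} (g : ℕ) (S : Finset ι) (Q : ι → PolyR g)
    (F : SymC g → ℂ) (τ : SymC g) :
    DQop g (∑ k ∈ S, Q k) (fun _ => F) τ = ∑ k ∈ S, DQop g (Q k) (fun _ => F) τ := by
  classical
  set T : Finset (RVars g →₀ ℕ) := S.biUnion (fun k => (Q k).support) with hT
  rw [DQop_superset g _ F τ T (MvPolynomial.support_sum.trans (by rfl))]
  have : ∀ k ∈ S, DQop g (Q k) (fun _ => F) τ = ∑ d ∈ T, (Q k).coeff d * Mfun g F τ d := by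
    intro k hk
    exact DQop_superset g _ F τ T (hT ▸ Finset.subset_biUnion_of_mem (fun k => (Q k).support) hk)
  rw [Finset.sum_congr rfl this, Finset.sum_comm]
  refine Finset.sum_congr rfl fun d _ => ?_
  rw [MvPolynomial.coeff_sum, Finset.sum_mul]

lemma DQop_zsmul (g : ℕ) (n : ℤ) (Q : PolyR g) (F : SymC g → ℂ) (τ : SymC g) :
    DQop g (n • Q) (fun _ => F) τ = n • DQop g Q (fun _ => F) τ := by
  rw [DQop_superset g _ F τ Q.support (MvPolynomial.support_smul), DQop_eq_Mfun,
    Finset.smul_sum]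
  refine Finset.sum_congr rfl fun d _ => ?_
  rw [MvPolynomial.coeff_smul, smul_mul_assoc]

def keyd (g : ℕ) (σ π : Equiv.Perm (Fin g)) : RVars g →₀ ℕ :=
  ∑ i : Fin g, Finsupp.single (π i, s(σ i, i)) 1

lemma sum_single_apply (g : ℕ) (f : Fin g → Fin g) (h : Fin g) :
    (∑ i : Fin g, Finsupp.single (f i) (1:ℕ)) h
      = (Finset.univ.filter (fun i => f i = h)).card := by
  classical
  rw [Finset.sum_apply']
  rw [Finset.card_filter]
  refine Finset.sum_congr rfl fun i _ => ?_
  simp [Finsupp.single_apply]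

lemma sum_single_eq_ones_iff (g : ℕ) (f : Fin g → Fin g) :
    (∑ i : Fin g, Finsupp.single (f i) (1:ℕ)) = Finsupp.equivFunOnFinite.symm (fun _ => 1)
      ↔ Function.Bijective f := by
  classical
  constructor
  · intro hf
    have hcard : ∀ h, (Finset.univ.filter (fun i => f i = h)).card = 1 := by
      intro h
      rw [← sum_single_apply g f h, hf]
      rfl
    constructor
    · intro i j hij
      obtain ⟨a, ha⟩ := Finset.card_eq_one.mp (hcard (f i))
      have hi : i ∈ Finset.univ.filter (fun k => f k = f i) := by simp
      have hj : j ∈ Finset.univ.filter (fun k => f k = f i) := by simp [hij]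
      rw [ha, Finset.mem_singleton] at hi hj
      rw [hi, hj]
    · intro h
      have : (Finset.univ.filter (fun i => f i = h)).Nonempty := by
        rw [← Finset.card_pos, hcard]; norm_num
      obtain ⟨i, hi⟩ := this
      exact ⟨i, (Finset.mem_filter.mp hi).2⟩
  · intro hf
    ext h
    rw [sum_single_apply g f h]
    obtain ⟨i, hi, hu⟩ := (Function.bijective_iff_existsUnique f).mp hf h
    have : Finset.univ.filter (fun i => f i = h) = {i} := by
      ext j
      simp only [Finset.mem_filter, Finset.mem_univ, true_and, Finset.mem_singleton]
      exact ⟨fun hj => hu j hj, fun hj => hj ▸ hi⟩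
    rw [this]
    rfl

lemma sum_filter_bij_eq_sum_perm {M : Type*} [AddCommMonoid M] (g : ℕ)
    (T : (Fin g → Fin g) → M) :
    ∑ f ∈ Finset.univ.filter (fun f : Fin g → Fin g => Function.Bijective f), T f
      = ∑ π : Equiv.Perm (Fin g), T ⇑π := by
  classical
  refine (Finset.sum_bij' (fun f hf => Equiv.ofBijective f
      (by simpa using (Finset.mem_filter.mp hf).2))
    (fun π _ => ⇑π) ?_ ?_ ?_ ?_ ?_).symm.symm
  · intro f hf; exact Finset.mem_univ _
  · intro π _; exact Finset.mem_filter.mpr ⟨Finset.mem_univ _, π.bijective⟩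
  · intro f hf; rfl
  · intro π _; ext x; rfl
  · intro f hf; rfl

lemma prod_X {S σv : Type*} [CommSemiring S] {ι : Type*} [Fintype ι] (v : ι → σv) :
    (∏ i : ι, MvPolynomial.X (v i) : MvPolynomial σv S)
      = MvPolynomial.monomial (∑ i : ι, Finsupp.single (v i) 1) (1:S) := by
  rw [MvPolynomial.monomial_sum_one]; rfl

lemma Rpoly_eq (g : ℕ) :
    Rpoly g (fun _ => 1) = ∑ σ : Equiv.Perm (Fin g), (Equiv.Perm.sign σ : ℤ) •
      ∑ π : Equiv.Perm (Fin g), MvPolynomial.monomial (keyd g σ π) (1:ℂ) := by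
  classical
  unfold Rpoly detT
  rw [Matrix.det_apply', MvPolynomial.coeff_sum]
  refine Finset.sum_congr rfl fun σ _ => ?_
  rw [← zsmul_eq_mul, MvPolynomial.coeff_smul]
  congr 1
  have hof : ∀ i : Fin g,
      (Matrix.of fun i j : Fin g => ∑ h : Fin g, MvPolynomial.X h *
        MvPolynomial.C (MvPolynomial.X (h, s(i, j)) : PolyR g)) (σ i) i
      = ∑ h : Fin g, MvPolynomial.X h *
          MvPolynomial.C (MvPolynomial.X (h, s(σ i, i)) : PolyR g) := fun i => rfl
  rw [Finset.prod_congr rfl (fun i _ => hof i), Finset.prod_univ_sum,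
      Fintype.piFinset_univ, MvPolynomial.coeff_sum]
  have hterm : ∀ x : Fin g → Fin g,
      MvPolynomial.coeff (Finsupp.equivFunOnFinite.symm fun _ => 1)
        (∏ i : Fin g, MvPolynomial.X (x i) *
          MvPolynomial.C (MvPolynomial.X (x i, s(σ i, i)) : PolyR g))
      = if Function.Bijective x then
          ∏ i : Fin g, (MvPolynomial.X (x i, s(σ i, i)) : PolyR g) else 0 := by
    intro x
    rw [Finset.prod_mul_distrib, ← map_prod, mul_comm, MvPolynomial.coeff_C_mul,
        prod_X x, MvPolynomial.coeff_monomial, mul_ite, mul_one, mul_zero]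
    exact if_congr (sum_single_eq_ones_iff g x) rfl rfl
  rw [Finset.sum_congr rfl (fun x _ => hterm x), ← Finset.sum_filter,
      sum_filter_bij_eq_sum_perm]
  exact Finset.sum_congr rfl fun π _ => prod_X fun i => (π i, s(σ i, i))

lemma restrictRow_keyd (g : ℕ) (σ π : Equiv.Perm (Fin g)) (h : Fin g) :
    restrictRow g (keyd g σ π) h
      = Finsupp.single s(σ (π.symm h), π.symm h) 1 := by
  classical
  ext s'
  have : restrictRow g (keyd g σ π) h s' = keyd g σ π (h, s') := by
    simp [restrictRow]
  rw [this, keyd, Finset.sum_apply']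
  rw [Finset.sum_eq_single (π.symm h)]
  · rw [Finsupp.single_apply, Finsupp.single_apply]
    simp only [Equiv.apply_symm_apply, Prod.mk.injEq]
    by_cases hs : s(σ (π.symm h), π.symm h) = s' <;> simp [hs]
  · intro i _ hi
    rw [Finsupp.single_apply, if_neg]
    intro hc
    apply hi
    have : π i = h := (Prod.mk.injEq _ _ _ _).mp hc |>.1
    rw [← this, Equiv.symm_apply_apply]
  · intro hmem
    exact absurd (Finset.mem_univ _) hmem

lemma monoDeriv_single (g : ℕ) (s : Sym2 (Fin g)) (f : SymC g → ℂ) (τ : SymC g) :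
    monoDeriv g (Finsupp.single s 1) f τ = (1/2 : ℂ) * fderiv ℂ f τ (symE2 g s) := by
  have hm : (Finsupp.single s 1 : Sym2 (Fin g) →₀ ℕ).toMultiset = {s} := by
    rw [Finsupp.toMultiset_single, one_smul]
  rw [monoDeriv, hm]
  obtain ⟨a, ha⟩ := List.length_eq_one_iff.mp
    (by rw [Multiset.length_toList, Multiset.card_singleton] :
      ({s} : Multiset (Sym2 (Fin g))).toList.length = 1)
  have has : a = s := by
    have : a ∈ ({s} : Multiset (Sym2 (Fin g))).toList := by rw [ha]; exact List.mem_singleton_self a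
    rw [Multiset.mem_toList, Multiset.mem_singleton] at this
    exact this
  rw [ha, has]
  show (1/2 : ℂ) ^ (1:ℕ) * iteratedFDeriv ℂ 1 f τ (fun i => symE2 g ([s].get i)) = _
  rw [iteratedFDeriv_one_apply, pow_one]
  rfl

lemma Mfun_keyd (g : ℕ) (σ π : Equiv.Perm (Fin g)) (F : SymC g → ℂ) (τ : SymC g) :
    Mfun g F τ (keyd g σ π) = ∏ i : Fin g, pdMat g F τ (σ i) i := by
  rw [Mfun]
  have : ∀ h : Fin g, monoDeriv g (restrictRow g (keyd g σ π) h) F τ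
      = pdMat g F τ (σ (π.symm h)) (π.symm h) := by
    intro h
    rw [restrictRow_keyd, monoDeriv_single]
    rfl
  rw [Finset.prod_congr rfl (fun h _ => this h)]
  exact Equiv.prod_comp π.symm (fun i => pdMat g F τ (σ i) i)

/-- For holomorphic `F` on open `U ⊆ Sym_g(ℂ)`,
`D_{R(1,…,1)}(F,…,F) = g!·det(∂F)` on `U`. -/
theorem statement_9 (g : ℕ) (hg : 1 ≤ g) (U : Set (SymC g)) (hU : IsOpen U)
    (F : SymC g → ℂ) (hF : DifferentiableOn ℂ F U) :
    ∀ τ ∈ U,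
      DQop g (Rpoly g fun _ => 1) (fun _ => F) τ
        = (Nat.factorial g : ℂ) * (pdMat g F τ).det := by
  intro τ _
  rw [Rpoly_eq, DQop_sum]
  have step : ∀ σ : Equiv.Perm (Fin g),
      DQop g ((Equiv.Perm.sign σ : ℤ) •
        ∑ π : Equiv.Perm (Fin g), MvPolynomial.monomial (keyd g σ π) (1:ℂ)) (fun _ => F) τ
      = (Equiv.Perm.sign σ : ℤ) •
          ∑ _π : Equiv.Perm (Fin g), ∏ i : Fin g, pdMat g F τ (σ i) i := by
    intro σ
    rw [DQop_zsmul, DQop_sum]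
    congr 1
    refine Finset.sum_congr rfl fun π _ => ?_
    rw [DQop_monomial, one_mul, Mfun_keyd]
  rw [Finset.sum_congr rfl (fun σ _ => step σ), Matrix.det_apply', Finset.mul_sum]
  refine Finset.sum_congr rfl fun σ _ => ?_
  rw [Finset.sum_const, Finset.card_univ, Fintype.card_perm, Fintype.card_fin,
    nsmul_eq_mul, zsmul_eq_mul]
  ring

end
end

section
/- Let g ≥ 1, let n = (n₁,…,n_g) ∈ ℕ^g with n₁+⋯+n_g = g and n ≠ (1,…,1), let U be an open subset of Sym_g(ℂ), and let F : U → ℂ be holomorphic. Then there exists a holomorphic function Φ : U → ℂ such that D_{R(n)}(F,…,F) = F·Φ on U; in particular D_{R(n)}(F,…,F) vanishes at every zero of F. -/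
open scoped BigOperators Matrix

noncomputable section

section Algebra

open MvPolynomial

lemma prod_X_eq_monomial {σ R : Type*} [CommSemiring R] {ι : Type*} (t : Finset ι) (f : ι → σ) :
    (∏ i ∈ t, (MvPolynomial.X (f i) : MvPolynomial σ R)) =
      MvPolynomial.monomial (∑ i ∈ t, Finsupp.single (f i) 1) 1 := by
  classical
  induction t using Finset.cons_induction with
  | empty => simp
  | cons a t ha ih =>
      rw [Finset.prod_cons, ih, Finset.sum_cons, MvPolynomial.X, MvPolynomial.monomial_mul,
        one_mul]

lemma rpoly_supported (g : ℕ) (n : Fin g → ℕ) (h₀ : Fin g) (hn0 : n h₀ = 0) :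
    Rpoly g n ∈ MvPolynomial.supported ℂ {v : RVars g | v.1 ≠ h₀} := by
  classical
  rw [Rpoly, detT, Matrix.det_apply', MvPolynomial.coeff_sum]
  refine Subalgebra.sum_mem _ fun σ _ => ?_
  rw [show ((Equiv.Perm.sign σ : ℤ) : MvPolynomial (Fin g) (PolyR g)) =
      MvPolynomial.C ((Equiv.Perm.sign σ : ℤ) : PolyR g) from
        (map_intCast (MvPolynomial.C : PolyR g →+* MvPolynomial (Fin g) (PolyR g)) _).symm,
    MvPolynomial.coeff_C_mul]
  refine Subalgebra.mul_mem _ (intCast_mem _ _) ?_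
  simp only [Matrix.of_apply]
  rw [Finset.prod_univ_sum, MvPolynomial.coeff_sum]
  refine Subalgebra.sum_mem _ fun fc _ => ?_
  rw [Finset.prod_mul_distrib, ← map_prod, prod_X_eq_monomial, mul_comm,
    MvPolynomial.coeff_C_mul, MvPolynomial.coeff_monomial]
  by_cases he : (∑ i, Finsupp.single (fc i) 1) = Finsupp.equivFunOnFinite.symm n
  · rw [he, if_pos rfl, mul_one]
    refine Subalgebra.prod_mem _ fun i _ => ?_
    refine MvPolynomial.X_mem_supported.2 ?_
    show fc i ≠ h₀
    intro hfc
    have := congrFun (congrArg (DFunLike.coe) he) h₀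
    rw [Finsupp.finset_sum_apply] at this
    simp only [Finsupp.coe_equivFunOnFinite_symm, hn0] at this
    have h1 : Finsupp.single (fc i) 1 h₀ = 0 :=
      Finset.sum_eq_zero_iff.1 this i (Finset.mem_univ i)
    rw [hfc, Finsupp.single_eq_same] at h1
    exact one_ne_zero h1
  · rw [if_neg he, mul_zero]
    exact Subalgebra.zero_mem _

lemma rpoly_block_zero (g : ℕ) (n : Fin g → ℕ) (h₀ : Fin g) (hn0 : n h₀ = 0)
    (d : RVars g →₀ ℕ) (hd : d ∈ (Rpoly g n).support) (s : Sym2 (Fin g)) : d (h₀, s) = 0 := by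
  by_contra hne
  have h1 : (h₀, s) ∈ d.support := Finsupp.mem_support_iff.2 hne
  have h2 : (h₀, s) ∈ (Rpoly g n).vars := MvPolynomial.mem_vars _ |>.2 ⟨d, hd, h1⟩
  exact (MvPolynomial.mem_supported.1 (rpoly_supported g n h₀ hn0) h2) rfl

end Algebra
section Analysis
set_option linter.unusedSectionVars false
set_option maxHeartbeats 1000000

open Metric Complex intervalIntegral

variable {E : Type*} [NormedAddCommGroup E] [NormedSpace ℂ E] [FiniteDimensional ℂ E]
variable {G : Type*} [NormedAddCommGroup G] [NormedSpace ℂ G] [FiniteDimensional ℂ G]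

/-- The derivative of the restriction of `f` to a complex line. -/
lemma hasDerivAt_line {U : Set E} (hU : IsOpen U) {f : E → G} (hf : DifferentiableOn ℂ f U)
    {x : E} (hx : x ∈ U) (v : E) :
    HasDerivAt (fun z : ℂ => f (x + z • v)) (fderiv ℂ f x v) 0 := by
  have hline : HasDerivAt (fun z : ℂ => x + z • v) v 0 := by
    simpa using ((hasDerivAt_id (0 : ℂ)).smul_const v).const_add x
  have hfd : HasFDerivAt f (fderiv ℂ f x) ((fun z : ℂ => x + z • v) 0) := by
    simpa using (hf.differentiableAt (hU.mem_nhds hx)).hasFDerivAt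
  exact hfd.comp_hasDerivAt 0 hline

lemma diffContOnCl_line {U : Set E} {f : E → G} (hf : DifferentiableOn ℂ f U)
    {x : E} {v : E} {ρ : ℝ} (hsub : ∀ z : ℂ, ‖z‖ ≤ ρ → x + z • v ∈ U) :
    DiffContOnCl ℂ (fun z : ℂ => f (x + z • v)) (ball 0 ρ) := by
  have hdiff : DifferentiableOn ℂ (fun z : ℂ => f (x + z • v)) (closedBall 0 ρ) := by
    refine hf.comp ?_ ?_
    · exact ((differentiable_id.smul_const v).const_add x).differentiableOn
    · intro z hz
      exact hsub z (by simpa using mem_closedBall_zero_iff.1 hz)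
  exact (hdiff.mono closure_ball_subset_closedBall).diffContOnCl

/-- Cauchy integral representation of the directional derivative. -/
lemma fderiv_apply_eq_integral {U : Set E} (hU : IsOpen U) {f : E → G}
    (hf : DifferentiableOn ℂ f U) {x : E} {v : E} {ρ : ℝ} (hρ : 0 < ρ)
    (hsub : ∀ z : ℂ, ‖z‖ ≤ ρ → x + z • v ∈ U) :
    fderiv ℂ f x v = (2 * Real.pi * Complex.I)⁻¹ •
      ∫ θ in (0:ℝ)..2 * Real.pi,
        ((deriv (circleMap 0 ρ) θ) * (circleMap 0 ρ θ) ^ (-2 : ℤ)) •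
          f (x + circleMap 0 ρ θ • v) := by
  have hx : x ∈ U := by simpa using hsub 0 (by simp [hρ.le])
  have hkey := (diffContOnCl_line hf hsub).deriv_eq_smul_circleIntegral hρ
  rw [(hasDerivAt_line hU hf hx v).deriv] at hkey
  have h2pi : (2 * Real.pi * Complex.I : ℂ) ≠ 0 := by simp [Real.pi_ne_zero, Complex.I_ne_zero]
  rw [← inv_smul_smul₀ h2pi (fderiv ℂ f x v), ← hkey, circleIntegral]
  simp only [sub_zero, smul_smul, one_div, zpow_neg, zpow_ofNat]

/-- Cauchy estimate for the directional derivative. -/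
lemma norm_fderiv_apply_le {U : Set E} (hU : IsOpen U) {f : E → G}
    (hf : DifferentiableOn ℂ f U) {x : E} {v : E} {ρ M : ℝ} (hρ : 0 < ρ)
    (hsub : ∀ z : ℂ, ‖z‖ ≤ ρ → x + z • v ∈ U)
    (hM : ∀ z : ℂ, ‖z‖ ≤ ρ → ‖f (x + z • v)‖ ≤ M) :
    ‖fderiv ℂ f x v‖ ≤ M / ρ := by
  have hx : x ∈ U := by simpa using hsub 0 (by simp [hρ.le])
  have := Complex.norm_deriv_le_of_forall_mem_sphere_norm_le hρ (diffContOnCl_line hf hsub)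
    (fun z hz => hM z (le_of_eq (mem_sphere_zero_iff_norm.1 hz)))
  rwa [(hasDerivAt_line hU hf hx v).deriv] at this

/-- The operator norm of `fderiv` is locally bounded for a holomorphic function. -/
lemma fderiv_locally_bounded {U : Set E} (hU : IsOpen U) {f : E → G}
    (hf : DifferentiableOn ℂ f U) {x₀ : E} (hx₀ : x₀ ∈ U) :
    ∃ δ > 0, ∃ C : ℝ, closedBall x₀ δ ⊆ U ∧
      ∀ x ∈ closedBall x₀ (δ / 2), ‖fderiv ℂ f x‖ ≤ C := by
  obtain ⟨δ, hδpos, hδ⟩ := (Metric.nhds_basis_closedBall.mem_iff).1 (hU.mem_nhds hx₀)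
  obtain ⟨M, hM⟩ := (isCompact_closedBall x₀ δ).exists_bound_of_continuousOn
    (hf.continuousOn.mono hδ)
  refine ⟨δ, hδpos, M / (δ / 2), hδ, fun x hx => ?_⟩
  have hM0 : 0 ≤ M := le_trans (norm_nonneg _) (hM x₀ (mem_closedBall_self hδpos.le))
  refine ContinuousLinearMap.opNorm_le_bound _ (by positivity) fun v => ?_
  rcases eq_or_ne v 0 with rfl | hv
  · simp
  have hvn : 0 < ‖v‖ := norm_pos_iff.2 hv
  have hρ : 0 < (δ / 2) / ‖v‖ := by positivity
  have hmem : ∀ z : ℂ, ‖z‖ ≤ (δ / 2) / ‖v‖ → x + z • v ∈ closedBall x₀ δ := by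
    intro z hz
    have h1 : ‖x + z • v - x₀‖ ≤ ‖x - x₀‖ + ‖z • v‖ := by
      calc ‖x + z • v - x₀‖ = ‖(x - x₀) + z • v‖ := by
            rw [show x + z • v - x₀ = (x - x₀) + z • v by abel]
      _ ≤ ‖x - x₀‖ + ‖z • v‖ := norm_add_le _ _
    have h2 : ‖z • v‖ ≤ δ / 2 := by
      rw [norm_smul]
      calc ‖z‖ * ‖v‖ ≤ ((δ / 2) / ‖v‖) * ‖v‖ := by gcongr
      _ = δ / 2 := div_mul_cancel₀ _ hvn.ne'
    have h3 : ‖x - x₀‖ ≤ δ / 2 := mem_closedBall_iff_norm.1 hx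
    exact mem_closedBall_iff_norm.2 (h1.trans (by linarith))
  have := norm_fderiv_apply_le hU hf hρ (fun z hz => hδ (hmem z hz))
    (fun z hz => hM _ (hmem z hz))
  calc ‖fderiv ℂ f x v‖ ≤ M / ((δ / 2) / ‖v‖) := this
  _ = M / (δ / 2) * ‖v‖ := by field_simp


lemma differentiableAt_fderiv_apply {U : Set E} (hU : IsOpen U) {f : E → G}
    (hf : DifferentiableOn ℂ f U) (v : E) {x₀ : E} (hx₀ : x₀ ∈ U) :
    DifferentiableAt ℂ (fun x => fderiv ℂ f x v) x₀ := by
  classical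
  rcases eq_or_ne v 0 with rfl | hv
  · have h0 : (fun x => fderiv ℂ f x (0 : E)) = fun _ => (0 : G) :=
      funext fun x => map_zero _
    rw [h0]; exact differentiableAt_const _
  have hvn : 0 < ‖v‖ := norm_pos_iff.2 hv
  obtain ⟨δ, hδpos, C, hδU, hC⟩ := fderiv_locally_bounded hU hf hx₀
  have hC0 : 0 ≤ C := le_trans (norm_nonneg _) (hC x₀ (mem_closedBall_self (by positivity)))
  set ρ : ℝ := (δ / 4) / ‖v‖ with hρdef
  have hρ : 0 < ρ := by positivity
  set ε : ℝ := δ / 4 with hεdef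
  have hε : 0 < ε := by positivity
  have hmem : ∀ x ∈ ball x₀ ε, ∀ z : ℂ, ‖z‖ ≤ ρ → x + z • v ∈ closedBall x₀ (δ / 2) := by
    intro x hx z hz
    have h2 : ‖z • v‖ ≤ δ / 4 := by
      rw [norm_smul]
      calc ‖z‖ * ‖v‖ ≤ ρ * ‖v‖ := by gcongr
      _ = δ / 4 := div_mul_cancel₀ _ hvn.ne'
    have h3 : ‖x - x₀‖ < ε := mem_ball_iff_norm.1 hx
    have h4 : ‖x + z • v - x₀‖ ≤ ‖x - x₀‖ + ‖z • v‖ := by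
      rw [show x + z • v - x₀ = (x - x₀) + z • v by abel]; exact norm_add_le _ _
    refine mem_closedBall_iff_norm.2 ?_
    rw [hεdef] at h3
    linarith
  have hmemU : ∀ x ∈ ball x₀ ε, ∀ z : ℂ, ‖z‖ ≤ ρ → x + z • v ∈ U :=
    fun x hx z hz => hδU (closedBall_subset_closedBall (by linarith) (hmem x hx z hz))
  have hcm : ∀ θ : ℝ, ‖(circleMap 0 ρ θ : ℂ)‖ = ρ := by
    intro θ
    simp [norm_circleMap_zero, abs_of_pos hρ]
  letI : MeasurableSpace E := borel E
  haveI : BorelSpace E := ⟨rfl⟩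
  letI : MeasurableSpace (E →L[ℂ] G) := borel _
  haveI : BorelSpace (E →L[ℂ] G) := ⟨rfl⟩
  set c : ℝ → ℂ := fun θ => deriv (circleMap 0 ρ) θ * (circleMap 0 ρ θ) ^ (-2 : ℤ) with hcdef
  have hcc : Continuous c := by
    rw [hcdef]
    refine Continuous.mul ?_ ?_
    · have hd : (fun θ : ℝ => deriv (circleMap 0 ρ) θ) = fun θ => circleMap 0 ρ θ * Complex.I :=
        funext fun θ => deriv_circleMap _ _ _
      show Continuous fun θ : ℝ => deriv (circleMap 0 ρ) θ
      rw [hd]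
      exact (continuous_circleMap 0 ρ).mul continuous_const
    · exact (continuous_circleMap 0 ρ).zpow₀ _ fun θ => Or.inl (circleMap_ne_center hρ.ne')
  have hcnorm : ∀ θ, ‖c θ‖ = ρ⁻¹ := by
    intro θ
    rw [hcdef]
    simp only [deriv_circleMap, norm_mul, norm_zpow,
      norm_circleMap_zero, abs_of_pos hρ, Complex.norm_I, mul_one]
    rw [zpow_neg, zpow_two]
    field_simp
  set Ψ : E → ℝ → G := fun x θ => c θ • f (x + circleMap 0 ρ θ • v) with hΨdef
  set A : E → ℝ → (E →L[ℂ] G) := fun x θ => c θ • fderiv ℂ f (x + circleMap 0 ρ θ • v) with hAdef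
  have hcont : ∀ x ∈ ball x₀ ε, Continuous (Ψ x) := by
    intro x hx
    apply hcc.smul
    have h1 : Continuous fun θ : ℝ => x + circleMap 0 ρ θ • v :=
      continuous_const.add ((continuous_circleMap 0 ρ).smul continuous_const)
    exact hf.continuousOn.comp_continuous h1 fun θ => hmemU x hx _ (le_of_eq (hcm θ))
  have hdiff : ∀ θ : ℝ, ∀ x ∈ ball x₀ ε, HasFDerivAt (fun x' => Ψ x' θ) (A x θ) x := by
    intro θ x hx
    have hw : x + circleMap 0 ρ θ • v ∈ U := hmemU x hx _ (le_of_eq (hcm θ))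
    have h1 : HasFDerivAt (fun x' : E => x' + circleMap 0 ρ θ • v)
        (ContinuousLinearMap.id ℂ E) x := (hasFDerivAt_id x).add_const _
    have h2 : HasFDerivAt f (fderiv ℂ f (x + circleMap 0 ρ θ • v))
        (x + circleMap 0 ρ θ • v) := (hf.differentiableAt (hU.mem_nhds hw)).hasFDerivAt
    have h3 := h2.comp x h1
    rw [ContinuousLinearMap.comp_id] at h3
    exact h3.const_smul (c θ)
  have hboundA : ∀ θ : ℝ, ∀ x ∈ ball x₀ ε, ‖A x θ‖ ≤ ρ⁻¹ * C := by
    intro θ x hx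
    have hAx : A x θ = c θ • fderiv ℂ f (x + circleMap 0 ρ θ • v) := rfl
    rw [hAx]
    refine ContinuousLinearMap.opNorm_le_bound _ (by positivity) fun w => ?_
    have h6 : ‖(fderiv ℂ f (x + circleMap 0 ρ θ • v)) w‖ ≤ C * ‖w‖ :=
      le_trans ((fderiv ℂ f _).le_opNorm w)
        (mul_le_mul_of_nonneg_right (hC _ (hmem x hx _ (le_of_eq (hcm θ)))) (norm_nonneg _))
    have h7 : ‖(c θ • fderiv ℂ f (x + circleMap 0 ρ θ • v)) w‖
        = ‖c θ‖ * ‖(fderiv ℂ f (x + circleMap 0 ρ θ • v)) w‖ := by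
      rw [ContinuousLinearMap.smul_apply]; exact norm_smul _ _
    rw [h7, hcnorm]
    calc ρ⁻¹ * ‖(fderiv ℂ f (x + circleMap 0 ρ θ • v)) w‖ ≤ ρ⁻¹ * (C * ‖w‖) := by
          exact mul_le_mul_of_nonneg_left h6 (by positivity)
      _ = ρ⁻¹ * C * ‖w‖ := by ring
  have hmeasA : MeasureTheory.AEStronglyMeasurable (A x₀)
      (MeasureTheory.volume.restrict (Set.uIoc (0 : ℝ) (2 * Real.pi))) := by
    apply Measurable.aestronglyMeasurable
    apply Measurable.smul hcc.measurable
    exact (measurable_fderiv ℂ f).comp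
      (continuous_const.add ((continuous_circleMap 0 ρ).smul continuous_const)).measurable
  have key := intervalIntegral.hasFDerivAt_integral_of_dominated_of_fderiv_le
    (𝕜 := ℂ) (μ := MeasureTheory.volume) (F := Ψ) (F' := A) (x₀ := x₀)
    (a := 0) (b := 2 * Real.pi) (bound := fun _ => ρ⁻¹ * C) (ball_mem_nhds x₀ hε)
    (Filter.eventually_of_mem (ball_mem_nhds x₀ hε) fun x hx =>
      (hcont x hx).aestronglyMeasurable)
    ((hcont x₀ (mem_ball_self hε)).intervalIntegrable _ _)
    hmeasA
    (MeasureTheory.ae_of_all _ fun θ _ x hx => hboundA θ x hx)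
    intervalIntegrable_const
    (MeasureTheory.ae_of_all _ fun θ _ x hx => hdiff θ x hx)
  have heq : ∀ x ∈ ball x₀ ε, fderiv ℂ f x v =
      (2 * Real.pi * Complex.I)⁻¹ • ∫ θ in (0:ℝ)..2 * Real.pi, Ψ x θ := fun x hx =>
    fderiv_apply_eq_integral hU hf hρ fun z hz => hmemU x hx z hz
  have hD : DifferentiableAt ℂ
      (fun x => (2 * Real.pi * Complex.I)⁻¹ • ∫ θ in (0:ℝ)..2 * Real.pi, Ψ x θ) x₀ :=
    key.differentiableAt.const_smul _
  exact hD.congr_of_eventuallyEq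
    (Filter.eventuallyEq_of_mem (ball_mem_nhds x₀ hε) heq)
lemma clm_eq_sum_coord (b : Module.Basis (Fin (Module.finrank ℂ E)) ℂ E) (T : E →L[ℂ] G) :
    T = ∑ j, (LinearMap.toContinuousLinearMap (b.coord j)).smulRight (T (b j)) := by
  ext w
  rw [ContinuousLinearMap.sum_apply]
  simp only [ContinuousLinearMap.smulRight_apply, LinearMap.coe_toContinuousLinearMap',
    Module.Basis.coord_apply]
  refine Eq.symm ?_
  calc ∑ j, b.repr w j • T (b j) = ∑ j, T (b.repr w j • b j) := by
        simp only [map_smul]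
    _ = T (∑ j, b.repr w j • b j) := (map_sum T _ _).symm
    _ = T w := by rw [b.sum_repr]

lemma differentiableOn_fderiv {U : Set E} (hU : IsOpen U) {f : E → G}
    (hf : DifferentiableOn ℂ f U) : DifferentiableOn ℂ (fderiv ℂ f) U := by
  classical
  set b := Module.finBasis ℂ E with hb
  have hrepr : (fderiv ℂ f : E → E →L[ℂ] G) = fun x =>
      ∑ j, ((ContinuousLinearMap.smulRightL ℂ E G (LinearMap.toContinuousLinearMap (b.coord j))) :
          G →L[ℂ] E →L[ℂ] G) (fderiv ℂ f x (b j)) :=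
    funext fun x => clm_eq_sum_coord b (fderiv ℂ f x)
  rw [hrepr]
  refine DifferentiableOn.fun_sum fun j _ => ?_
  refine (ContinuousLinearMap.differentiable _).comp_differentiableOn ?_
  exact fun x hx => (differentiableAt_fderiv_apply hU hf (b j) hx).differentiableWithinAt

instance finDimMultilinear (k : ℕ) :
    FiniteDimensional ℂ (ContinuousMultilinearMap ℂ (fun _ : Fin k => E) ℂ) :=
  FiniteDimensional.of_injective
    (ContinuousMultilinearMap.toMultilinearMapLinear
      (R' := ℂ) (A := ℂ) (M₁ := fun _ : Fin k => E) (M₂ := ℂ))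
    ContinuousMultilinearMap.toMultilinearMap_injective

lemma differentiableOn_iteratedFDeriv {U : Set E} (hU : IsOpen U) {f : E → ℂ}
    (hf : DifferentiableOn ℂ f U) (k : ℕ) :
    DifferentiableOn ℂ (iteratedFDeriv ℂ k f) U := by
  induction k with
  | zero =>
      rw [iteratedFDeriv_zero_eq_comp]
      exact ((continuousMultilinearCurryFin0 ℂ E ℂ).symm.toContinuousLinearEquiv :
        ℂ ≃L[ℂ] _).differentiable.comp_differentiableOn hf
  | succ k ih =>
      rw [iteratedFDeriv_succ_eq_comp_left]
      exact ((continuousMultilinearCurryLeftEquiv ℂ (fun _ : Fin (k+1) => E)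
        ℂ).symm.toContinuousLinearEquiv.differentiable).comp_differentiableOn
        (differentiableOn_fderiv hU ih)

end Analysis

lemma iteratedFDeriv_zero_len {E' : Type*} [NormedAddCommGroup E'] [NormedSpace ℂ E'] {k : ℕ}
    (hk : k = 0) (F : E' → ℂ) (τ : E') (m : Fin k → E') :
    iteratedFDeriv ℂ k F τ m = F τ := by
  subst hk; exact iteratedFDeriv_zero_apply m

lemma monoDeriv_zero (g : ℕ) (F : SymC g → ℂ) (τ : SymC g) : monoDeriv g 0 F τ = F τ := by
  have hlen : (0 : Sym2 (Fin g) →₀ ℕ).toMultiset.toList.length = 0 := by simp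
  rw [monoDeriv, iteratedFDeriv_zero_len hlen, hlen, pow_zero, one_mul]

lemma differentiableOn_monoDeriv (g : ℕ) (e : Sym2 (Fin g) →₀ ℕ) {U : Set (SymC g)}
    (hU : IsOpen U) {F : SymC g → ℂ} (hF : DifferentiableOn ℂ F U) :
    DifferentiableOn ℂ (fun τ => monoDeriv g e F τ) U := by
  unfold monoDeriv
  refine DifferentiableOn.const_mul ?_ _
  exact (ContinuousMultilinearMap.apply ℂ (fun _ : Fin e.toMultiset.toList.length => SymC g) ℂ
      (fun i => (symE2 g (e.toMultiset.toList.get i) : SymC g))).differentiable.comp_differentiableOn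
    (differentiableOn_iteratedFDeriv hU hF _)

/-- For `n ∈ ℕ^g` with `Σ n_h = g`, `n ≠ (1,…,1)`, and holomorphic `F` on an
open `U ⊆ Sym_g(ℂ)`, there is a holomorphic `Φ` on `U` with `D_{R(n)}(F,…,F) = F·Φ` on `U`;
in particular `D_{R(n)}(F,…,F)` vanishes at every zero of `F`. -/
theorem statement_10 (g : ℕ) (hg : 1 ≤ g) (n : Fin g → ℕ) (hn : ∑ h, n h = g)
    (hne : n ≠ fun _ => 1) (U : Set (SymC g)) (hU : IsOpen U)
    (F : SymC g → ℂ) (hF : DifferentiableOn ℂ F U) :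
    ∃ Φ : SymC g → ℂ, DifferentiableOn ℂ Φ U ∧
      (∀ τ ∈ U, DQop g (Rpoly g n) (fun _ => F) τ = F τ * Φ τ) ∧
      ∀ τ ∈ U, F τ = 0 → DQop g (Rpoly g n) (fun _ => F) τ = 0 := by
  classical
  have hex : ∃ h₀ : Fin g, n h₀ = 0 := by
    by_contra hc
    push_neg at hc
    have h1 : ∀ h ∈ Finset.univ, (1 : ℕ) ≤ n h := fun h _ => Nat.one_le_iff_ne_zero.2 (hc h)
    have h2 : (∑ _h : Fin g, (1 : ℕ)) = ∑ h, n h := by rw [hn]; simp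
    have h3 := (Finset.sum_eq_sum_iff_of_le h1).1 h2
    exact hne (funext fun h => (h3 h (Finset.mem_univ h)).symm)
  obtain ⟨h₀, hh₀⟩ := hex
  set Φ : SymC g → ℂ := fun τ => ∑ d ∈ (Rpoly g n).support, (Rpoly g n).coeff d *
      ∏ h ∈ Finset.univ.erase h₀, monoDeriv g (restrictRow g d h) F τ with hΦ
  have hdiffprod : ∀ (d : RVars g →₀ ℕ) (s : Finset (Fin g)),
      DifferentiableOn ℂ (fun τ => ∏ h ∈ s, monoDeriv g (restrictRow g d h) F τ) U := by
    intro d s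
    induction s using Finset.cons_induction with
    | empty => simpa using differentiableOn_const (1 : ℂ)
    | cons a t ha ih =>
        simp only [Finset.prod_cons]
        exact (differentiableOn_monoDeriv g _ hU hF).mul ih
  have hdiff : DifferentiableOn ℂ Φ U := by
    rw [hΦ]
    exact DifferentiableOn.fun_sum fun d _ => DifferentiableOn.const_mul (hdiffprod d _) _
  have heq : ∀ τ : SymC g, DQop g (Rpoly g n) (fun _ => F) τ = F τ * Φ τ := by
    intro τ
    rw [DQop, hΦ, Finset.mul_sum]
    refine Finset.sum_congr rfl fun d hd => ?_
    have hrr : restrictRow g d h₀ = 0 := by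
      ext s
      simp [restrictRow, rpoly_block_zero g n h₀ hh₀ d hd s]
    rw [← Finset.mul_prod_erase Finset.univ _ (Finset.mem_univ h₀), hrr, monoDeriv_zero]
    ring
  exact ⟨Φ, hdiff, fun τ _ => heq τ, fun τ _ hFτ => by rw [heq τ, hFτ, zero_mul]⟩

end
end

section
/- Let g ≥ 1, let k be a positive integer, let v ∈ ℕ, and let P ∈ ℂ[R₁,…,R_g] satisfy P(AR₁Aᵀ,…,AR_gAᵀ) = det(A)^v·P(R₁,…,R_g) for all A ∈ GL(g,ℂ). Then P is pluriharmonic (with respect to g×k matrix blocks X₁,…,X_g) if and only if Δ_{11}(P̃) = 0. -/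
open scoped BigOperators Matrix

noncomputable section

/-- Variables of the `g × (gk)` matrix `X = (X₁,…,X_g)`: `(i, h, ν)` is the entry of `X_h`
in row `i` and column `ν`. -/
abbrev XVars (g k : ℕ) : Type := Fin g × Fin g × Fin k

/-- The substitution `P ↦ P̃ = P(X₁X₁ᵀ,…,X_gX_gᵀ)`. -/
def toXm (g k : ℕ) : PolyR g →ₐ[ℂ] MvPolynomial (XVars g k) ℂ :=
  MvPolynomial.aeval fun v : RVars g =>
    Sym2.lift ⟨fun i j => ∑ ν : Fin k,
        MvPolynomial.X (i, v.1, ν) * MvPolynomial.X (j, v.1, ν),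
      fun i j => Finset.sum_congr rfl fun ν _ => mul_comm _ _⟩ v.2

/-- `Δ_{ij} = Σ_ν ∂²/∂x_{iν}∂x_{jν}`, the sum over all `gk` columns of `X`. -/
def Deltam (g k : ℕ) (i j : Fin g) (p : MvPolynomial (XVars g k) ℂ) :
    MvPolynomial (XVars g k) ℂ :=
  ∑ h : Fin g, ∑ ν : Fin k, MvPolynomial.pderiv (i, h, ν) (MvPolynomial.pderiv (j, h, ν) p)


namespace Statement14Aux

open MvPolynomial

theorem pderiv_aeval' {σ τ : Type*} [Fintype σ] [DecidableEq σ] [DecidableEq τ]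
    (f : σ → MvPolynomial τ ℂ) (q : τ) (p : MvPolynomial σ ℂ) :
    pderiv q (aeval f p) = ∑ b : σ, aeval f (pderiv b p) * pderiv q (f b) := by
  induction p using MvPolynomial.induction_on with
  | C a => simp
  | add p r hp hr =>
      simp only [map_add, hp, hr, ← Finset.sum_add_distrib, add_mul]
  | mul_X p s hp =>
      simp only [map_mul, aeval_X, pderiv_mul, hp, map_add, Finset.sum_mul, Finset.sum_add_distrib,
        pderiv_X, Pi.single_apply, apply_ite, map_one, map_zero, mul_one, mul_zero, ite_mul,
        zero_mul, one_mul, add_mul, add_zero]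
      rw [Finset.sum_congr rfl (fun x _ => show
          (if s = x then (aeval f) ((pderiv x) p) * f s * (pderiv q) (f x) + (aeval f) p * (pderiv q) (f x)
            else (aeval f) ((pderiv x) p) * f s * (pderiv q) (f x)) =
          (aeval f) ((pderiv x) p) * f s * (pderiv q) (f x) + (if s = x then (aeval f) p * (pderiv q) (f x) else 0)
          from by split_ifs <;> simp)]
      rw [Finset.sum_add_distrib, Finset.sum_ite_eq, if_pos (Finset.mem_univ s)]
      refine congrArg (· + _) ?_
      exact Finset.sum_congr rfl fun x _ => by ring

theorem pderiv_comm' {σ : Type*} [DecidableEq σ] (u w : σ) (p : MvPolynomial σ ℂ) :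
    pderiv u (pderiv w p) = pderiv w (pderiv u p) := by
  induction p using MvPolynomial.induction_on with
  | C a => simp
  | add p r hp hr => simp [hp, hr]
  | mul_X p s hp =>
      simp only [pderiv_mul, map_add, pderiv_X, hp, Pi.single_apply]
      split_ifs <;> simp <;> ring

lemma sum_swap4 {α β γ δ M : Type*} [Fintype α] [Fintype β] [Fintype γ] [Fintype δ]
    [AddCommMonoid M] (F : α → β → γ → δ → M) :
    ∑ a, ∑ b, ∑ c, ∑ d, F a b c d = ∑ c, ∑ d, ∑ a, ∑ b, F a b c d :=
  calc ∑ a, ∑ b, ∑ c, ∑ d, F a b c d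
      = ∑ a, ∑ c, ∑ b, ∑ d, F a b c d :=
        Finset.sum_congr rfl fun _ _ => Finset.sum_comm
    _ = ∑ c, ∑ a, ∑ b, ∑ d, F a b c d := Finset.sum_comm
    _ = ∑ c, ∑ a, ∑ d, ∑ b, F a b c d :=
        Finset.sum_congr rfl fun _ _ => Finset.sum_congr rfl fun _ _ => Finset.sum_comm
    _ = ∑ c, ∑ d, ∑ a, ∑ b, F a b c d :=
        Finset.sum_congr rfl fun _ _ => Finset.sum_comm

/-- The substitution `X ↦ AX` (blockwise) on `X`-polynomials. -/
def subX (g k : ℕ) (A : Matrix (Fin g) (Fin g) ℂ) :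
    MvPolynomial (XVars g k) ℂ →ₐ[ℂ] MvPolynomial (XVars g k) ℂ :=
  aeval fun q : XVars g k => ∑ u : Fin g, C (A q.1 u) * X (u, q.2)

lemma subX_X (g k : ℕ) (A : Matrix (Fin g) (Fin g) ℂ) (q : XVars g k) :
    subX g k A (X q) = ∑ u : Fin g, C (A q.1 u) * X (u, q.2) := aeval_X _ _

lemma subX_C (g k : ℕ) (A : Matrix (Fin g) (Fin g) ℂ) (c : ℂ) :
    subX g k A (C c) = C c := by
  rw [show (C c : MvPolynomial (XVars g k) ℂ) = algebraMap ℂ _ c from rfl, AlgHom.commutes]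

lemma subX_comp (g k : ℕ) (A B : Matrix (Fin g) (Fin g) ℂ) (p : MvPolynomial (XVars g k) ℂ) :
    subX g k A (subX g k B p) = subX g k (B * A) p := by
  have : (subX g k A).comp (subX g k B) = subX g k (B * A) := by
    apply MvPolynomial.algHom_ext
    intro q
    simp [subX_X, map_sum, Matrix.mul_apply, Finset.mul_sum, Finset.sum_mul, map_mul]
    rw [Finset.sum_comm]
    exact Finset.sum_congr rfl fun u _ => Finset.sum_congr rfl fun w _ => by ring
  exact AlgHom.congr_fun this p

lemma subX_one (g k : ℕ) (p : MvPolynomial (XVars g k) ℂ) : subX g k 1 p = p := by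
  have : subX g k (1 : Matrix (Fin g) (Fin g) ℂ) = AlgHom.id ℂ _ := by
    apply MvPolynomial.algHom_ext
    intro q
    simp [subX_X, Matrix.one_apply, apply_ite (C (σ := XVars g k)), ite_mul]
  rw [this]; rfl

lemma subX_inj (g k : ℕ) (A : Matrix (Fin g) (Fin g) ℂ) (hA : IsUnit A.det) :
    Function.Injective (subX g k A) := by
  intro p q h
  have := congrArg (subX g k A⁻¹) h
  rwa [subX_comp, subX_comp, Matrix.mul_nonsing_inv A hA, subX_one, subX_one] at this

lemma pderiv_subX (g k : ℕ) (A : Matrix (Fin g) (Fin g) ℂ) (q : XVars g k)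
    (p : MvPolynomial (XVars g k) ℂ) :
    pderiv q (subX g k A p) =
      ∑ b : Fin g, C (A b q.1) * subX g k A (pderiv (b, q.2) p) := by
  obtain ⟨q1, q2⟩ := q
  show pderiv (q1, q2) (aeval _ p) = _
  rw [pderiv_aeval']
  rw [Fintype.sum_prod_type]
  refine Finset.sum_congr rfl fun b _ => ?_
  have : ∀ c : Fin g × Fin k,
      pderiv (q1, q2) (∑ u : Fin g, C (A b u) * X (u, c)) =
        if c = q2 then C (A b q1) else 0 := by
    intro c
    rw [map_sum]
    simp only [pderiv_C_mul, pderiv_X, Pi.single_apply, Prod.mk.injEq, mul_ite, mul_one, mul_zero]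
    by_cases hc : c = q2
    · subst hc
      simp
    · simp [hc]
  simp only [this, mul_ite, mul_zero, Finset.sum_ite_eq', Finset.mem_univ, if_true]
  exact mul_comm _ _

lemma Deltam_subX (g k : ℕ) (A : Matrix (Fin g) (Fin g) ℂ) (i j : Fin g)
    (p : MvPolynomial (XVars g k) ℂ) :
    Deltam g k i j (subX g k A p) =
      ∑ a : Fin g, ∑ b : Fin g, C (A a i) * C (A b j) * subX g k A (Deltam g k a b p) := by
  unfold Deltam
  simp only [pderiv_subX, map_sum, pderiv_C_mul, Finset.mul_sum]
  rw [sum_swap4, Finset.sum_comm]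
  refine Finset.sum_congr rfl fun a _ => Finset.sum_congr rfl fun b _ =>
    Finset.sum_congr rfl fun h _ => Finset.sum_congr rfl fun ν _ => by ring

lemma toXm_substA (g k : ℕ) (A : Matrix (Fin g) (Fin g) ℂ) (P : PolyR g) :
    toXm g k (substA g A P) = subX g k A (toXm g k P) := by
  have : (toXm g k).comp (substA g A) = (subX g k A).comp (toXm g k) := by
    apply MvPolynomial.algHom_ext
    rintro ⟨h, m⟩
    induction m using Sym2.inductionOn with
    | hf i j =>
      simp only [AlgHom.comp_apply, substA, toXm, subX, aeval_X, Sym2.lift_mk, map_sum, map_mul]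
      simp only [aeval_X, Sym2.lift_mk, Finset.mul_sum, Finset.sum_mul, aeval_C, algebraMap_eq]
      rw [show ∀ F : Fin k → Fin g → Fin g → MvPolynomial (XVars g k) ℂ,
          (∑ ν, ∑ u, ∑ w, F ν u w) = ∑ u, ∑ w, ∑ ν, F ν u w from fun F => by
            rw [Finset.sum_comm]
            exact Finset.sum_congr rfl fun u _ => Finset.sum_comm]
      conv_rhs => rw [Finset.sum_comm]
      refine Finset.sum_congr rfl fun u _ => Finset.sum_congr rfl fun w _ =>
        Finset.sum_congr rfl fun ν _ => by ring
  exact AlgHom.congr_fun this P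

lemma Deltam_smul (g k : ℕ) (i j : Fin g) (c : ℂ)
    (p : MvPolynomial (XVars g k) ℂ) :
    Deltam g k i j (c • p) = c • Deltam g k i j p := by
  simp [Deltam, map_smul, Finset.smul_sum]

lemma Deltam_comm (g k : ℕ) (i j : Fin g) (p : MvPolynomial (XVars g k) ℂ) :
    Deltam g k i j p = Deltam g k j i p :=
  Finset.sum_congr rfl fun h _ => Finset.sum_congr rfl fun ν _ =>
    pderiv_comm' _ _ _

lemma permM_apply {g : ℕ} (σ : Equiv.Perm (Fin g)) (a b : Fin g) :
    σ.permMatrix ℂ a b = if b = σ a then 1 else 0 := by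
  by_cases h : b = σ a <;>
    simp [Equiv.Perm.permMatrix, PEquiv.toMatrix_apply, Equiv.toPEquiv, h, eq_comm]

lemma permM_col {g : ℕ} (σ : Equiv.Perm (Fin g)) (a b : Fin g) :
    σ.permMatrix ℂ a (σ b) = if a = b then 1 else 0 := by
  rw [permM_apply]
  by_cases h : a = b
  · simp [h]
  · rw [if_neg (fun hc => h (σ.injective hc).symm), if_neg h]

lemma permM_det_isUnit {g : ℕ} (σ : Equiv.Perm (Fin g)) : IsUnit (σ.permMatrix ℂ).det := by
  rw [Matrix.det_permutation]
  rcases Int.units_eq_one_or (Equiv.Perm.sign σ) with h | h <;> simp [h]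

/-- the matrix with column `z` replaced by `e_i + e_j`, based on `swap z i` -/
def colM {g : ℕ} (z i j : Fin g) : Matrix (Fin g) (Fin g) ℂ :=
  ((Equiv.swap z i).permMatrix ℂ).updateCol z
    (fun a => (if a = i then 1 else 0) + (if a = j then 1 else 0))

lemma colM_col {g : ℕ} (z i j a : Fin g) :
    colM z i j a z = (if a = i then 1 else 0) + (if a = j then 1 else 0) :=
  Matrix.updateCol_self

lemma colM_det_isUnit {g : ℕ} (z i j : Fin g) (hij : i ≠ j) : IsUnit (colM z i j).det := by
  set σ := Equiv.swap z i with hσ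
  have h1 : (fun a => if a = i then (1:ℂ) else 0) = fun a => σ.permMatrix ℂ a z := by
    funext a
    have : z = σ i := by simp [hσ, Equiv.swap_apply_right]
    rw [this, permM_col]
  have hcz : σ j ≠ z := by
    intro h
    apply hij
    have := congrArg σ h
    rw [Equiv.swap_apply_self] at this
    rw [this, hσ, Equiv.swap_apply_left]
  have h2 : (Matrix.updateCol (σ.permMatrix ℂ) z (fun a => if a = j then (1:ℂ) else 0)).det
      = 0 := by
    apply Matrix.det_zero_of_column_eq (Ne.symm hcz)
    intro a
    rw [Matrix.updateCol_self, Matrix.updateCol_ne hcz, permM_col]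
  rw [colM, show (fun a => (if a = i then (1:ℂ) else 0) + (if a = j then 1 else 0)) =
      ((fun a => if a = i then (1:ℂ) else 0) + (fun a => if a = j then (1:ℂ) else 0)) from rfl,
    Matrix.det_updateCol_add, h1, h2, Matrix.updateCol_eq_self, add_zero]
  exact permM_det_isUnit σ

end Statement14Aux

/-- If `P ∈ ℂ[R₁,…,R_g]` satisfies `P(AR₁Aᵀ,…,AR_gAᵀ) = det(A)^v·P` for all
`A ∈ GL(g,ℂ)`, then `P` is pluriharmonic (w.r.t. `g×k` blocks `X₁,…,X_g`) iff `Δ₁₁(P̃) = 0`. -/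
theorem statement_14 (g k : ℕ) (hg : 1 ≤ g) (hk : 1 ≤ k) (v : ℕ) (P : PolyR g)
    (hP : ∀ A : Matrix (Fin g) (Fin g) ℂ, IsUnit A.det → substA g A P = A.det ^ v • P) :
    (∀ i j : Fin g, Deltam g k i j (toXm g k P) = 0) ↔
      Deltam g k ⟨0, hg⟩ ⟨0, hg⟩ (toXm g k P) = 0 := by
  classical
  constructor
  · intro h
    exact h _ _
  · intro h0 i j
    open Statement14Aux MvPolynomial in
    set z : Fin g := ⟨0, hg⟩ with hz
    have key : ∀ A : Matrix (Fin g) (Fin g) ℂ, IsUnit A.det →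
        (∑ a : Fin g, ∑ b : Fin g,
          MvPolynomial.C (A a z) * MvPolynomial.C (A b z) * Deltam g k a b (toXm g k P)) = 0 := by
      intro A hA
      have e : subX g k A (toXm g k P) = A.det ^ v • toXm g k P := by
        rw [← toXm_substA, hP A hA, map_smul]
      have e2 : Deltam g k z z (subX g k A (toXm g k P)) = 0 := by
        rw [e, Deltam_smul, h0, smul_zero]
      rw [Deltam_subX] at e2
      apply subX_inj g k A hA
      rw [map_zero, map_sum, ← e2]
      refine Finset.sum_congr rfl fun a _ => ?_
      rw [map_sum]
      exact Finset.sum_congr rfl fun b _ => by rw [map_mul, map_mul, subX_C, subX_C]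
    have diag : ∀ i : Fin g, Deltam g k i i (toXm g k P) = 0 := by
      intro i
      have hk := key ((Equiv.swap z i).permMatrix ℂ) (permM_det_isUnit _)
      have hcol : ∀ a : Fin g, (Equiv.swap z i).permMatrix ℂ a z = if a = i then 1 else 0 := by
        intro a
        rw [permM_apply]
        by_cases ha : a = i
        · subst ha
          simp [Equiv.swap_apply_right]
        · rw [if_neg, if_neg ha]
          intro hcontra
          apply ha
          have h2 := congrArg (Equiv.swap z i) hcontra
          rw [Equiv.swap_apply_self, Equiv.swap_apply_left] at h2
          exact h2.symm
      simp only [hcol, apply_ite (MvPolynomial.C (σ := XVars g k)), map_one, map_zero,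
        ite_mul, one_mul, zero_mul, mul_ite, mul_one, mul_zero,
        Finset.sum_ite_eq', Finset.mem_univ, if_true] at hk
      exact hk
    by_cases hij : i = j
    · subst hij
      exact diag i
    · have hk := key (colM z i j) (colM_det_isUnit z i j hij)
      simp only [colM_col, map_add, apply_ite (MvPolynomial.C (σ := XVars g k)), map_one,
        map_zero, add_mul, mul_add, ite_mul, one_mul, zero_mul, mul_ite, mul_one, mul_zero,
        Finset.sum_add_distrib, Finset.sum_ite_eq', Finset.mem_univ, if_true] at hk
      rw [diag i, diag j, Deltam_comm g k j i, zero_add, add_zero] at hk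
      exact add_self_eq_zero.mp hk

end
end
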